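/- arXiv:cs/0207094 — 2 statements merged into one kernel-verified Lean document; each statement's English description precedes it below -/
import Mathlib

section
/- Let r be a database instance over a finite domain D and IC a set of binary integrity constraints. For every repair r′ of r wrt IC, there exists an answer set S of the repair program Π(r) such that r′ = {p(ā) | p′(ā) ∈ S}. -/
/-!
The witness is `S(r,r′)`. It is a model of `Π(r)` because `r′ ⊨ IC`: whenever a triggering or
stabilizing rule has its body in `S(r,r′)`, the ground clause it comes from is made true in `r′`
by a literal that is not excluded from the head. For minimality, a model `S′ ⊆ S(r,r′)` of the
reduct determines the instance `I(S′)`; the triggering and stabilizing rules force `I(S′) ⊨ IC`,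
and `Δ(r, I(S′)) ⊆ Δ(r, r′)`, so minimality of `r′` gives `I(S′) = r′`. The persistence rules
then put every literal of `S(r,r′)` into `S′`.
-/

namespace CQA

/-! ## Ground disjunctive extended logic programs and answer sets -/

/-- Ground literals over atoms of type `α`: atoms and classically negated atoms. -/
inductive Lit (α : Type) : Type
  | pos : α → Lit α
  | neg : α → Lit α

/-- Complement of a ground literal. -/
def Lit.compl {α : Type} : Lit α → Lit α
  | .pos a => .neg a
  | .neg a => .pos a

/-- A ground disjunctive rule `⋁ head ← body, not nbody`
(`nbody` collects the literals occurring under weak negation `not`). -/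
structure Rule (α : Type) where
  head : Set (Lit α)
  body : Set (Lit α)
  nbody : Set (Lit α)

/-- A ground disjunctive extended logic program: a set of ground rules. -/
abbrev Program (α : Type) := Set (Rule α)

/-- A fact. -/
def fact {α : Type} (L : Lit α) : Rule α := ⟨{L}, ∅, ∅⟩

/-- `S` contains no complementary pair of literals. -/
def Coherent {α : Type} (S : Set (Lit α)) : Prop :=
  ∀ a : α, ¬ (Lit.pos a ∈ S ∧ Lit.neg a ∈ S)

/-- `S` satisfies every rule of `P`, reading `not L` as `L ∉ S`:
whenever all body literals are in `S` and no weakly negated literal is in `S`,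
some head disjunct is in `S`. -/
def SatProg {α : Type} (S : Set (Lit α)) (P : Program α) : Prop :=
  ∀ R ∈ P, R.body ⊆ S → (∀ L ∈ R.nbody, L ∉ S) → ∃ L ∈ R.head, L ∈ S

/-- A model of a ground program: a set of ground literals without complementary
pairs satisfying every rule, with `not L` read as `L ∉ S`. -/
def IsModel {α : Type} (S : Set (Lit α)) (P : Program α) : Prop :=
  Coherent S ∧ SatProg S P

/-- The Gelfond–Lifschitz reduct of `P` with respect to `S`: delete every rule
whose body contains `not L` with `L ∈ S`, then delete all remaining `not L`
conditions. -/
def reduct {α : Type} (P : Program α) (S : Set (Lit α)) : Program α :=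
  {R' | ∃ R ∈ P, (∀ L ∈ R.nbody, L ∉ S) ∧ R' = Rule.mk R.head R.body ∅}

/-- `S` is an answer set of `P`: `S` has no complementary pair and is a minimal
model of the reduct `^S P`. -/
def AnswerSet {α : Type} (S : Set (Lit α)) (P : Program α) : Prop :=
  Coherent S ∧ SatProg S (reduct P S) ∧
    ∀ S' : Set (Lit α), S' ⊆ S → SatProg S' (reduct P S) → S' = S

/-- The intersection of all answer sets of `P`. -/
def Core {α : Type} (P : Program α) : Set (Lit α) :=
  {L | ∀ S : Set (Lit α), AnswerSet S P → L ∈ S}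

/-! ## Well-founded semantics for ground extended disjunctive programs -/

/-- The body of rule `R` is true in the partial interpretation `I`:
the body literals belong to `I` and every weakly negated literal is false
(its complement belongs to `I`). -/
def bodyTrue {α : Type} (I : Set (Lit α)) (R : Rule α) : Prop :=
  R.body ⊆ I ∧ ∀ L ∈ R.nbody, L.compl ∈ I

/-- Immediate-consequence operator `T_Π(I)`: all literals occurring in the head
of a rule whose body is true in `I` and whose remaining head disjuncts are
false in `I`. -/
def Timm {α : Type} (P : Program α) (I : Set (Lit α)) : Set (Lit α) :=
  {L | ∃ R ∈ P, L ∈ R.head ∧ bodyTrue I R ∧ ∀ L' ∈ R.head, L' ≠ L → L'.compl ∈ I}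

/-- `X` is an unfounded set of literals with respect to `I`: for every `L ∈ X`
and every rule with `L` in its head, either the body is false or defeated
(some body literal has its complement in `I` or lies in `X`, or some weakly
negated literal is in `I`), or the head is already satisfied by `I`
independently of `X`. -/
def UnfoundedSet {α : Type} (P : Program α) (I X : Set (Lit α)) : Prop :=
  ∀ L ∈ X, ∀ R ∈ P, L ∈ R.head →
    (∃ B ∈ R.body, B.compl ∈ I ∨ B ∈ X) ∨
    (∃ B ∈ R.nbody, B ∈ I) ∨
    (∃ L' ∈ R.head, L' ≠ L ∧ L' ∈ I ∧ L' ∉ X)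

/-- The greatest unfounded set of `P` with respect to `I`. -/
def GUS {α : Type} (P : Program α) (I : Set (Lit α)) : Set (Lit α) :=
  ⋃₀ {X | UnfoundedSet P I X}

/-- The well-founded operator `𝒲_Π(I) := T_Π(I) ∪ ¬.GUS_Π(I)`. -/
def WOp {α : Type} (P : Program α) (I : Set (Lit α)) : Set (Lit α) :=
  Timm P I ∪ Lit.compl '' GUS P I

/-- The well-founded interpretation `W_Π`, the least fixpoint `𝒲_Π^ω(∅)`. -/
def WFInterp {α : Type} (P : Program α) : Set (Lit α) :=
  ⋃ n : ℕ, (WOp P)^[n] ∅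

/-! ## Relational databases and binary integrity constraints -/

/-- A ground database atom `p(ā)` over predicates `Pred` and domain `D`. -/
abbrev DBAtom (Pred D : Type) := Pred × List D

/-- A database instance over the schema `(Pred, ar)` and domain `D`:
a finite set of ground atoms respecting the arities. -/
structure Instance (Pred D : Type) (ar : Pred → ℕ) where
  atoms : Set (DBAtom Pred D)
  finite : atoms.Finite
  wf : ∀ a ∈ atoms, a.2.length = ar a.1

/-- A binary integrity constraint in standard format
`∀ (⋁_i p_i(x̄_i) ∨ ⋁_i ¬q_i(ȳ_i) ∨ φ)` with `1 ≤ n + m ≤ 2`,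
where `φ` is a formula of built-in predicates with fixed extensions
(represented semantically as a predicate on variable assignments). -/
structure BIC (Pred D : Type) (ar : Pred → ℕ) where
  nvars : ℕ
  pos : List (Pred × List (Fin nvars))
  neg : List (Pred × List (Fin nvars))
  builtin : (Fin nvars → D) → Prop
  wfpos : ∀ a ∈ pos, a.2.length = ar a.1
  wfneg : ∀ a ∈ neg, a.2.length = ar a.1
  lb : 1 ≤ pos.length + neg.length
  ub : pos.length + neg.length ≤ 2

variable {Pred D : Type} {ar : Pred → ℕ}

/-- The ground clause of constraint `c` under the assignment `ν` holds in the
set of atoms `A`. -/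
def BIC.holdsAt (c : BIC Pred D ar) (A : Set (DBAtom Pred D)) (ν : Fin c.nvars → D) : Prop :=
  (∃ a ∈ c.pos, (a.1, a.2.map ν) ∈ A) ∨ (∃ a ∈ c.neg, (a.1, a.2.map ν) ∉ A) ∨ c.builtin ν

/-- The set of atoms `A` (as a Herbrand structure over `D`) satisfies all
constraints in `IC`. -/
def SatSet (A : Set (DBAtom Pred D)) (IC : Set (BIC Pred D ar)) : Prop :=
  ∀ c ∈ IC, ∀ ν : Fin c.nvars → D, c.holdsAt A ν

/-- The instance `r` satisfies the set of integrity constraints `IC`. -/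
def SatIC (r : Instance Pred D ar) (IC : Set (BIC Pred D ar)) : Prop :=
  SatSet r.atoms IC

/-- `r'` is a repair of `r` w.r.t. `IC`: `r' ⊨ IC` and the symmetric difference
`Δ(r,r')` is minimal under set inclusion in `{Δ(r,r*) | r* ⊨ IC}`. -/
def IsRepair (r r' : Instance Pred D ar) (IC : Set (BIC Pred D ar)) : Prop :=
  SatIC r' IC ∧
    ∀ r'' : Instance Pred D ar, SatIC r'' IC →
      symmDiff r.atoms r''.atoms ⊆ symmDiff r.atoms r'.atoms →
      symmDiff r.atoms r''.atoms = symmDiff r.atoms r'.atoms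

/-- `r'` is a Dalal repair of `r` w.r.t. `IC`: `r' ⊨ IC` and the cardinality
`|Δ(r,r')|` is minimal in `{|Δ(r,r*)| : r* ⊨ IC}`. -/
def IsDalalRepair (r r' : Instance Pred D ar) (IC : Set (BIC Pred D ar)) : Prop :=
  SatIC r' IC ∧
    ∀ r'' : Instance Pred D ar, SatIC r'' IC →
      (symmDiff r.atoms r'.atoms).ncard ≤ (symmDiff r.atoms r''.atoms).ncard

/-! ## The change program and the repair program -/

/-- Atoms of the repair programs: database atoms `p(ā)`, primed atoms `p′(ā)`,
and domain atoms `dom(a)` (playing the role of `act_r(a)` when grounding over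
the active domain). -/
inductive GAtom (Pred D : Type) : Type
  | base : Pred → List D → GAtom Pred D
  | primed : Pred → List D → GAtom Pred D
  | dom : D → GAtom Pred D

/-- Variables occurring in a list of atoms with variable tuples. -/
def varsIn {n : ℕ} (l : List (Pred × List (Fin n))) : Set (Fin n) :=
  {v | ∃ a ∈ l, v ∈ a.2}

/-- The domain atoms `dom(ν v)` for the variables `v ∈ V`. -/
def domBody {n : ℕ} (ν : Fin n → D) (V : Set (Fin n)) : Set (Lit (GAtom Pred D)) :=
  {L | ∃ v ∈ V, L = Lit.pos (GAtom.dom (ν v))}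

/-- The positive primed head disjuncts `p′_i(ν x̄_i)` of constraint `c`. -/
def posHead (c : BIC Pred D ar) (ν : Fin c.nvars → D) : Set (Lit (GAtom Pred D)) :=
  {L | ∃ a ∈ c.pos, L = Lit.pos (GAtom.primed a.1 (a.2.map ν))}

/-- The negative primed head disjuncts `¬q′_i(ν ȳ_i)` of constraint `c`. -/
def negHead (c : BIC Pred D ar) (ν : Fin c.nvars → D) : Set (Lit (GAtom Pred D)) :=
  {L | ∃ a ∈ c.neg, L = Lit.neg (GAtom.primed a.1 (a.2.map ν))}

/-- The triggering rule of constraint `c` at assignment `ν`: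
`⋁ p′_i ∨ ⋁ ¬q′_i ← dom(x̄_1,…,x̄_n), not p_1,…,not p_n, q_1,…,q_m, not φ`
(the condition `not φ` on the built-in formula, which has a fixed extension,
is accounted for by including the ground rule only when `φ(ν)` is false). -/
def trigRule (c : BIC Pred D ar) (ν : Fin c.nvars → D) : Rule (GAtom Pred D) where
  head := posHead c ν ∪ negHead c ν
  body := domBody ν (varsIn c.pos) ∪
    {L | ∃ a ∈ c.neg, L = Lit.pos (GAtom.base a.1 (a.2.map ν))}
  nbody := {L | ∃ a ∈ c.pos, L = Lit.pos (GAtom.base a.1 (a.2.map ν))}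

/-- The stabilizing rule of `c` at `ν` for the `j`-th positive database literal:
remove `p′_j` from the disjunctive head and add its complement `¬p′_j` to the
body, together with the `dom` atoms and `not φ`. -/
def stabPosRule (c : BIC Pred D ar) (ν : Fin c.nvars → D) (j : Fin c.pos.length) :
    Rule (GAtom Pred D) where
  head := {L | ∃ i : Fin c.pos.length, i ≠ j ∧
      L = Lit.pos (GAtom.primed (c.pos.get i).1 ((c.pos.get i).2.map ν))} ∪ negHead c ν
  body := domBody ν (varsIn c.pos ∪ varsIn c.neg) ∪
    {Lit.neg (GAtom.primed (c.pos.get j).1 ((c.pos.get j).2.map ν))}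
  nbody := ∅

/-- The stabilizing rule of `c` at `ν` for the `j`-th negative database literal:
remove `¬q′_j` from the disjunctive head and add its complement `q′_j` to the
body, together with the `dom` atoms and `not φ`. -/
def stabNegRule (c : BIC Pred D ar) (ν : Fin c.nvars → D) (j : Fin c.neg.length) :
    Rule (GAtom Pred D) where
  head := posHead c ν ∪ {L | ∃ i : Fin c.neg.length, i ≠ j ∧
      L = Lit.neg (GAtom.primed (c.neg.get i).1 ((c.neg.get i).2.map ν))}
  body := domBody ν (varsIn c.pos ∪ varsIn c.neg) ∪
    {Lit.pos (GAtom.primed (c.neg.get j).1 ((c.neg.get j).2.map ν))}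
  nbody := ∅

/-- The change program `Π_Δ(r)` grounded over the subdomain `A ⊆ D`:
facts for `r` and for the (active) domain, triggering rules and stabilizing
rules for all constraints in `IC`. -/
def changeProgOn (r : Instance Pred D ar) (IC : Set (BIC Pred D ar)) (A : Set D) :
    Program (GAtom Pred D) :=
  {R | ∃ a ∈ r.atoms, R = fact (Lit.pos (GAtom.base a.1 a.2))} ∪
  {R | ∃ d ∈ A, R = fact (Lit.pos (GAtom.dom d))} ∪
  {R | ∃ c ∈ IC, ∃ ν : Fin c.nvars → D, (∀ i, ν i ∈ A) ∧ ¬ c.builtin ν ∧ R = trigRule c ν} ∪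
  {R | ∃ c ∈ IC, ∃ ν : Fin c.nvars → D, (∀ i, ν i ∈ A) ∧ ¬ c.builtin ν ∧
        ∃ j : Fin c.pos.length, R = stabPosRule c ν j} ∪
  {R | ∃ c ∈ IC, ∃ ν : Fin c.nvars → D, (∀ i, ν i ∈ A) ∧ ¬ c.builtin ν ∧
        ∃ j : Fin c.neg.length, R = stabNegRule c ν j}

/-- The change program `Π_Δ(r)` grounded over the full domain `D`. -/
def changeProg (r : Instance Pred D ar) (IC : Set (BIC Pred D ar)) :
    Program (GAtom Pred D) :=
  changeProgOn r IC Set.univ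

/-- The persistence rules `p′(x̄) ← p(x̄), not ¬p′(x̄)` and
`¬p′(x̄) ← dom(x̄), not p(x̄), not p′(x̄)`, grounded over `A ⊆ D`. -/
def persistProgOn (ar : Pred → ℕ) (A : Set D) : Program (GAtom Pred D) :=
  {R | ∃ (p : Pred) (t : List D), t.length = ar p ∧ (∀ d ∈ t, d ∈ A) ∧
    (R = Rule.mk {Lit.pos (GAtom.primed p t)} {Lit.pos (GAtom.base p t)}
          {Lit.neg (GAtom.primed p t)} ∨
     R = Rule.mk {Lit.neg (GAtom.primed p t)} {L | ∃ d ∈ t, L = Lit.pos (GAtom.dom d)}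
          {Lit.pos (GAtom.base p t), Lit.pos (GAtom.primed p t)})}

/-- The repair program `Π(r)` grounded over `A ⊆ D`: the change program plus
the persistence rules. -/
def repairProgOn (r : Instance Pred D ar) (IC : Set (BIC Pred D ar)) (A : Set D) :
    Program (GAtom Pred D) :=
  changeProgOn r IC A ∪ persistProgOn ar A

/-- The repair program `Π(r)` grounded over the full domain `D`. -/
def repairProg (r : Instance Pred D ar) (IC : Set (BIC Pred D ar)) :
    Program (GAtom Pred D) :=
  repairProgOn r IC Set.univ

/-- The database instance corresponding to a set of ground literals:
`I(S) = {p(ā) | p′(ā) ∈ S} ∪ {p(ā) | p(ā) ∈ S and ¬p′(ā) ∉ S}`. -/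
def IofS (S : Set (Lit (GAtom Pred D))) : Set (DBAtom Pred D) :=
  {a | Lit.pos (GAtom.primed a.1 a.2) ∈ S} ∪
  {a | Lit.pos (GAtom.base a.1 a.2) ∈ S ∧ Lit.neg (GAtom.primed a.1 a.2) ∉ S}

/-- The database instance `{p(ā) | p′(ā) ∈ S}` extracted from the primed
atoms of `S`. -/
def primedAtoms (S : Set (Lit (GAtom Pred D))) : Set (DBAtom Pred D) :=
  {a | Lit.pos (GAtom.primed a.1 a.2) ∈ S}

/-- `S(r,r′) = {p(ā) | p(ā) ∈ r} ∪ {p′(ā) | p(ā) ∈ r′} ∪ {¬p′(ā) | p(ā) ∉ r′}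
∪ {dom(a) | a ∈ D}`. -/
def SofRR (r r' : Instance Pred D ar) : Set (Lit (GAtom Pred D)) :=
  {L | ∃ a ∈ r.atoms, L = Lit.pos (GAtom.base a.1 a.2)} ∪
  {L | ∃ a ∈ r'.atoms, L = Lit.pos (GAtom.primed a.1 a.2)} ∪
  {L | ∃ a : DBAtom Pred D, a.2.length = ar a.1 ∧ a ∉ r'.atoms ∧
        L = Lit.neg (GAtom.primed a.1 a.2)} ∪
  {L | ∃ d : D, L = Lit.pos (GAtom.dom d)}

/-! ## Active domain and domain independence -/

/-- The active domain of `r`: the constants occurring in `r`. -/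
def ActDom (r : Instance Pred D ar) : Set D :=
  {d | ∃ a ∈ r.atoms, d ∈ a.2}

/-- Satisfaction of `IC` in `A` relativized to the subdomain `Dm`. -/
def SatSetOn (A : Set (DBAtom Pred D)) (IC : Set (BIC Pred D ar)) (Dm : Set D) : Prop :=
  ∀ c ∈ IC, ∀ ν : Fin c.nvars → D, (∀ i, ν i ∈ Dm) → c.holdsAt A ν

/-- `IC` is domain independent: for every instance, satisfaction of the
constraints depends only on the active domain. -/
def DomIndep (IC : Set (BIC Pred D ar)) : Prop :=
  ∀ (r : Instance Pred D ar) (A : Set D), ActDom r ⊆ A →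
    (SatSetOn r.atoms IC A ↔ SatSet r.atoms IC)

/-! ## Weak constraints and Dalal answer sets -/

/-- The violated ground instances of the weak constraints
`⇐ p′(x̄), not p(x̄)` and `⇐ ¬p′(x̄), p(x̄)` in `S` (a ground weak constraint
is violated by `S` iff all its body conditions hold in `S`). -/
def weakViol (ar : Pred → ℕ) (S : Set (Lit (GAtom Pred D))) :
    Set (Bool × DBAtom Pred D) :=
  {x | x.2.2.length = ar x.2.1 ∧
    ((x.1 = true ∧ Lit.pos (GAtom.primed x.2.1 x.2.2) ∈ S ∧
        Lit.pos (GAtom.base x.2.1 x.2.2) ∉ S) ∨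
     (x.1 = false ∧ Lit.neg (GAtom.primed x.2.1 x.2.2) ∈ S ∧
        Lit.pos (GAtom.base x.2.1 x.2.2) ∈ S))}

/-- Answer sets of the program `Π^D(r)` (the change program plus the weak
constraints): answer sets of `Π_Δ(r)` minimizing the number of violated
ground weak constraints. -/
def DalalAnswerSet (r : Instance Pred D ar) (IC : Set (BIC Pred D ar))
    (S : Set (Lit (GAtom Pred D))) : Prop :=
  AnswerSet S (changeProg r IC) ∧
    ∀ S' : Set (Lit (GAtom Pred D)), AnswerSet S' (changeProg r IC) →
      (weakViol ar S).ncard ≤ (weakViol ar S').ncard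

/-! ## Functional dependencies and unary constraints -/

/-- A unary integrity constraint: a BIC with at most one database literal. -/
def BIC.IsUnary (c : BIC Pred D ar) : Prop := c.pos.length + c.neg.length ≤ 1

/-- A functional dependency: a BIC of the form
`∀ (¬p(x̄,ȳ) ∨ ¬p(x̄,z̄) ∨ ȳ = z̄)` with pairwise distinct variables. -/
def BIC.IsFD (c : BIC Pred D ar) : Prop :=
  c.pos = [] ∧ ∃ (p : Pred) (xs ys zs : List (Fin c.nvars)),
    ys.length = zs.length ∧ (xs ++ ys ++ zs).Nodup ∧
    c.neg = [(p, xs ++ ys), (p, xs ++ zs)] ∧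
    ∀ ν : Fin c.nvars → D, (c.builtin ν ↔ ys.map ν = zs.map ν)

section AnswerSets

variable {α : Type}

theorem satProg_reduct_self_iff {P : Program α} {S : Set (Lit α)} :
    SatProg S (reduct P S) ↔ SatProg S P := by
  constructor
  · intro hS R hR hb hn
    exact hS ⟨R.head, R.body, ∅⟩ ⟨R, hR, hn, rfl⟩ hb (by simp)
  · rintro hS _ ⟨R, hR, hn, rfl⟩ hb -
    exact hS R hR hb hn

theorem SatProg.exists_mem_head_of_reduct {P : Program α} {S S' : Set (Lit α)}
    (hS' : SatProg S' (reduct P S)) {R : Rule α} (hR : R ∈ P) (hn : ∀ L ∈ R.nbody, L ∉ S)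
    (hb : R.body ⊆ S') : ∃ L ∈ R.head, L ∈ S' :=
  hS' ⟨R.head, R.body, ∅⟩ ⟨R, hR, hn, rfl⟩ hb (by simp)

theorem SatProg.mem_of_fact_of_reduct {P : Program α} {S S' : Set (Lit α)}
    (hS' : SatProg S' (reduct P S)) {L : Lit α} (hL : fact L ∈ P) : L ∈ S' := by
  obtain ⟨L', rfl, hL'⟩ := hS'.exists_mem_head_of_reduct hL (by simp [fact]) (by simp [fact])
  exact hL'

end AnswerSets

section Rules

variable {r : Instance Pred D ar} {IC : Set (BIC Pred D ar)}

theorem fact_base_mem_repairProg {a : DBAtom Pred D} (ha : a ∈ r.atoms) :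
    fact (Lit.pos (GAtom.base a.1 a.2)) ∈ repairProg r IC :=
  Or.inl (Or.inl (Or.inl (Or.inl (Or.inl ⟨a, ha, rfl⟩))))

theorem fact_dom_mem_repairProg (d : D) : fact (Lit.pos (GAtom.dom d)) ∈ repairProg r IC :=
  Or.inl (Or.inl (Or.inl (Or.inl (Or.inr ⟨d, trivial, rfl⟩))))

theorem trigRule_mem_repairProg {c : BIC Pred D ar} (hc : c ∈ IC) {ν : Fin c.nvars → D}
    (hν : ¬ c.builtin ν) : trigRule c ν ∈ repairProg r IC :=
  Or.inl (Or.inl (Or.inl (Or.inr ⟨c, hc, ν, fun _ => trivial, hν, rfl⟩)))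

theorem stabPosRule_mem_repairProg {c : BIC Pred D ar} (hc : c ∈ IC) {ν : Fin c.nvars → D}
    (hν : ¬ c.builtin ν) (j : Fin c.pos.length) : stabPosRule c ν j ∈ repairProg r IC :=
  Or.inl (Or.inl (Or.inr ⟨c, hc, ν, fun _ => trivial, hν, j, rfl⟩))

theorem stabNegRule_mem_repairProg {c : BIC Pred D ar} (hc : c ∈ IC) {ν : Fin c.nvars → D}
    (hν : ¬ c.builtin ν) (j : Fin c.neg.length) : stabNegRule c ν j ∈ repairProg r IC :=
  Or.inl (Or.inr ⟨c, hc, ν, fun _ => trivial, hν, j, rfl⟩)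

theorem persist_primed_mem_repairProg {p : Pred} {t : List D} (ht : t.length = ar p) :
    Rule.mk {Lit.pos (GAtom.primed p t)} {Lit.pos (GAtom.base p t)}
      {Lit.neg (GAtom.primed p t)} ∈ repairProg r IC :=
  Or.inr ⟨p, t, ht, fun _ _ => trivial, Or.inl rfl⟩

theorem persist_neg_primed_mem_repairProg {p : Pred} {t : List D} (ht : t.length = ar p) :
    Rule.mk {Lit.neg (GAtom.primed p t)} {L | ∃ d ∈ t, L = Lit.pos (GAtom.dom d)}
      {Lit.pos (GAtom.base p t), Lit.pos (GAtom.primed p t)} ∈ repairProg r IC :=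
  Or.inr ⟨p, t, ht, fun _ _ => trivial, Or.inr rfl⟩

variable {c : BIC Pred D ar} {ν : Fin c.nvars → D}

theorem stabPosRule_head_subset (j : Fin c.pos.length) :
    (stabPosRule c ν j).head ⊆ posHead c ν ∪ negHead c ν := by
  rintro L (⟨i, -, rfl⟩ | hL)
  · exact Or.inl ⟨_, List.get_mem _ _, rfl⟩
  · exact Or.inr hL

theorem stabNegRule_head_subset (j : Fin c.neg.length) :
    (stabNegRule c ν j).head ⊆ posHead c ν ∪ negHead c ν := by
  rintro L (hL | ⟨i, -, rfl⟩)
  · exact Or.inl hL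
  · exact Or.inr ⟨_, List.get_mem _ _, rfl⟩

theorem subset_insert_stabPosRule_head (j : Fin c.pos.length) :
    posHead c ν ∪ negHead c ν ⊆
      insert (Lit.pos (GAtom.primed (c.pos.get j).1 ((c.pos.get j).2.map ν)))
        (stabPosRule c ν j).head := by
  rintro L (⟨a, ha, rfl⟩ | hL)
  · obtain ⟨i, rfl⟩ := List.mem_iff_get.mp ha
    by_cases hij : i = j
    · exact Or.inl (by rw [hij])
    · exact Or.inr (Or.inl ⟨i, hij, rfl⟩)
  · exact Or.inr (Or.inr hL)

theorem subset_insert_stabNegRule_head (j : Fin c.neg.length) :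
    posHead c ν ∪ negHead c ν ⊆
      insert (Lit.neg (GAtom.primed (c.neg.get j).1 ((c.neg.get j).2.map ν)))
        (stabNegRule c ν j).head := by
  rintro L (hL | ⟨a, ha, rfl⟩)
  · exact Or.inr (Or.inl hL)
  · obtain ⟨i, rfl⟩ := List.mem_iff_get.mp ha
    by_cases hij : i = j
    · exact Or.inl (by rw [hij])
    · exact Or.inr (Or.inr ⟨i, hij, rfl⟩)

end Rules

section Witness

variable {r r' : Instance Pred D ar}

@[simp]
theorem pos_base_mem_SofRR_iff {p : Pred} {t : List D} :
    Lit.pos (GAtom.base p t) ∈ SofRR r r' ↔ (p, t) ∈ r.atoms := by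
  simp [SofRR]

@[simp]
theorem pos_primed_mem_SofRR_iff {p : Pred} {t : List D} :
    Lit.pos (GAtom.primed p t) ∈ SofRR r r' ↔ (p, t) ∈ r'.atoms := by
  simp [SofRR]

@[simp]
theorem neg_primed_mem_SofRR_iff {p : Pred} {t : List D} :
    Lit.neg (GAtom.primed p t) ∈ SofRR r r' ↔ t.length = ar p ∧ (p, t) ∉ r'.atoms := by
  simp [SofRR]

@[simp]
theorem pos_dom_mem_SofRR (d : D) : Lit.pos (GAtom.dom d) ∈ SofRR r r' := by
  simp [SofRR]

theorem coherent_SofRR : Coherent (SofRR r r') := by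
  rintro (⟨p, t⟩ | ⟨p, t⟩ | d) ⟨hpos, hneg⟩ <;> simp_all [SofRR]

end Witness

section Model

variable {r r' : Instance Pred D ar} {IC : Set (BIC Pred D ar)}

theorem exists_mem_head_SofRR (hr' : SatIC r' IC) {c : BIC Pred D ar} (hc : c ∈ IC)
    {ν : Fin c.nvars → D} (hν : ¬ c.builtin ν) :
    ∃ L ∈ posHead c ν ∪ negHead c ν, L ∈ SofRR r r' := by
  rcases hr' c hc ν with ⟨a, ha, hmem⟩ | ⟨a, ha, hmem⟩ | hφ
  · exact ⟨_, Or.inl ⟨a, ha, rfl⟩, pos_primed_mem_SofRR_iff.2 hmem⟩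
  · exact ⟨_, Or.inr ⟨a, ha, rfl⟩,
      neg_primed_mem_SofRR_iff.2 ⟨by rw [List.length_map, c.wfneg a ha], hmem⟩⟩
  · exact absurd hφ hν

theorem exists_mem_head_SofRR_of_notMem (hr' : SatIC r' IC) {c : BIC Pred D ar} (hc : c ∈ IC)
    {ν : Fin c.nvars → D} (hν : ¬ c.builtin ν) {L₀ : Lit (GAtom Pred D)}
    {H : Set (Lit (GAtom Pred D))} (hH : posHead c ν ∪ negHead c ν ⊆ insert L₀ H)
    (hL₀ : L₀ ∉ SofRR r r') : ∃ L ∈ H, L ∈ SofRR r r' := by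
  obtain ⟨L, hL, hLS⟩ := exists_mem_head_SofRR hr' hc hν
  rcases hH hL with rfl | hL
  · exact absurd hLS hL₀
  · exact ⟨L, hL, hLS⟩

theorem satProg_SofRR (hr' : SatIC r' IC) : SatProg (SofRR r r') (repairProg r IC) := by
  intro R hR hbody hnbody
  rcases hR with ((((⟨a, ha, rfl⟩ | ⟨d, -, rfl⟩) | ⟨c, hc, ν, -, hν, rfl⟩) |
      ⟨c, hc, ν, -, hν, j, rfl⟩) | ⟨c, hc, ν, -, hν, j, rfl⟩) | ⟨p, t, ht, -, rfl | rfl⟩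
  · exact ⟨_, rfl, pos_base_mem_SofRR_iff.2 ha⟩
  · exact ⟨_, rfl, pos_dom_mem_SofRR d⟩
  · exact exists_mem_head_SofRR hr' hc hν
  · have hj : Lit.neg (GAtom.primed (c.pos.get j).1 _) ∈ SofRR r r' := hbody (Or.inr rfl)
    exact exists_mem_head_SofRR_of_notMem hr' hc hν
      (subset_insert_stabPosRule_head j) fun hpos => coherent_SofRR _ ⟨hpos, hj⟩
  · have hj : Lit.pos (GAtom.primed (c.neg.get j).1 _) ∈ SofRR r r' := hbody (Or.inr rfl)
    exact exists_mem_head_SofRR_of_notMem hr' hc hν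
      (subset_insert_stabNegRule_head j) fun hneg => coherent_SofRR _ ⟨hj, hneg⟩
  · have hneg : Lit.neg (GAtom.primed p t) ∉ SofRR r r' := hnbody _ rfl
    exact ⟨_, rfl, by simpa [ht] using hneg⟩
  · have hpos : Lit.pos (GAtom.primed p t) ∉ SofRR r r' := hnbody _ (Or.inr rfl)
    exact ⟨_, rfl, neg_primed_mem_SofRR_iff.2 ⟨ht, fun h => hpos (pos_primed_mem_SofRR_iff.2 h)⟩⟩

end Model

section Minimality

variable {r r' : Instance Pred D ar} {IC : Set (BIC Pred D ar)} {S' : Set (Lit (GAtom Pred D))}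

theorem domBody_subset_of_satProg_reduct {S : Set (Lit (GAtom Pred D))}
    (hS' : SatProg S' (reduct (repairProg r IC) S)) {n : ℕ} (ν : Fin n → D) (V : Set (Fin n)) :
    domBody ν V ⊆ S' := by
  rintro L ⟨v, -, rfl⟩
  exact hS'.mem_of_fact_of_reduct (fact_dom_mem_repairProg _)

theorem IofS_subset (hsub : S' ⊆ SofRR r r') : IofS S' ⊆ r.atoms ∪ r'.atoms := by
  rintro a (ha | ⟨ha, -⟩)
  · exact Or.inr (pos_primed_mem_SofRR_iff.1 (hsub ha))
  · exact Or.inl (pos_base_mem_SofRR_iff.1 (hsub ha))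

theorem notMem_IofS_of_neg_primed_mem (hsub : S' ⊆ SofRR r r') {a : DBAtom Pred D}
    (ha : Lit.neg (GAtom.primed a.1 a.2) ∈ S') : a ∉ IofS S' := by
  rintro (hpos | ⟨-, hneg⟩)
  · exact coherent_SofRR _ ⟨hsub hpos, hsub ha⟩
  · exact hneg ha

theorem neg_primed_mem_of_not_mem_IofS
    (hS' : SatProg S' (reduct (repairProg r IC) (SofRR r r'))) {a : DBAtom Pred D}
    (ha : a ∈ r.atoms) (hI : a ∉ IofS S') : Lit.neg (GAtom.primed a.1 a.2) ∈ S' := by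
  by_contra hneg
  exact hI (Or.inr ⟨hS'.mem_of_fact_of_reduct (fact_base_mem_repairProg ha), hneg⟩)

theorem pos_primed_mem_of_mem_IofS (hsub : S' ⊆ SofRR r r') {a : DBAtom Pred D}
    (ha : a ∉ r.atoms) (hI : a ∈ IofS S') : Lit.pos (GAtom.primed a.1 a.2) ∈ S' := by
  rcases hI with hpos | ⟨hbase, -⟩
  · exact hpos
  · exact absurd (pos_base_mem_SofRR_iff.1 (hsub hbase)) ha

theorem head_notMem_of_not_holdsAt (hsub : S' ⊆ SofRR r r') {c : BIC Pred D ar}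
    {ν : Fin c.nvars → D} (hviol : ¬ c.holdsAt (IofS S') ν) :
    ∀ L ∈ posHead c ν ∪ negHead c ν, L ∉ S' := by
  rintro L (⟨a, ha, rfl⟩ | ⟨a, ha, rfl⟩) hL
  · exact hviol (Or.inl ⟨a, ha, Or.inl hL⟩)
  · exact hviol (Or.inr (Or.inl ⟨a, ha, notMem_IofS_of_neg_primed_mem hsub hL⟩))

theorem satSet_IofS (hsub : S' ⊆ SofRR r r')
    (hS' : SatProg S' (reduct (repairProg r IC) (SofRR r r'))) : SatSet (IofS S') IC := by
  intro c hc ν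
  by_contra hviol
  have hhead := head_notMem_of_not_holdsAt hsub hviol
  simp only [BIC.holdsAt, not_or, not_exists, not_and, not_not] at hviol
  obtain ⟨hpos, hneg, hν⟩ := hviol
  have hdom := domBody_subset_of_satProg_reduct hS' ν
  by_cases hposr : ∃ a ∈ c.pos, (a.1, a.2.map ν) ∈ r.atoms
  · obtain ⟨a, ha, har⟩ := hposr
    obtain ⟨j, rfl⟩ := List.mem_iff_get.mp ha
    obtain ⟨L, hL, hLS⟩ := hS'.exists_mem_head_of_reduct (stabPosRule_mem_repairProg hc hν j)
      (by simp [stabPosRule])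
      (Set.union_subset (hdom _)
        (by simpa using neg_primed_mem_of_not_mem_IofS hS' har (hpos _ ha)))
    exact hhead L (stabPosRule_head_subset j hL) hLS
  by_cases hnegr : ∃ a ∈ c.neg, (a.1, a.2.map ν) ∉ r.atoms
  · obtain ⟨a, ha, har⟩ := hnegr
    obtain ⟨j, rfl⟩ := List.mem_iff_get.mp ha
    obtain ⟨L, hL, hLS⟩ := hS'.exists_mem_head_of_reduct (stabNegRule_mem_repairProg hc hν j)
      (by simp [stabNegRule])
      (Set.union_subset (hdom _)
        (by simpa using pos_primed_mem_of_mem_IofS hsub har (hneg _ ha)))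
    exact hhead L (stabNegRule_head_subset j hL) hLS
  push Not at hposr hnegr
  obtain ⟨L, hL, hLS⟩ := hS'.exists_mem_head_of_reduct (trigRule_mem_repairProg hc hν)
    (by rintro L ⟨a, ha, rfl⟩ hbase; exact hposr a ha (pos_base_mem_SofRR_iff.1 hbase))
    (Set.union_subset (hdom _) (by
      rintro L ⟨a, ha, rfl⟩
      exact hS'.mem_of_fact_of_reduct (fact_base_mem_repairProg (hnegr a ha))))
  exact hhead L hL hLS

theorem symmDiff_IofS_subset (hsub : S' ⊆ SofRR r r')
    (hS' : SatProg S' (reduct (repairProg r IC) (SofRR r r'))) :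
    symmDiff r.atoms (IofS S') ⊆ symmDiff r.atoms r'.atoms := by
  intro a
  simp only [Set.mem_symmDiff]
  rintro (⟨har, hI⟩ | ⟨hI, har⟩)
  · have hneg := hsub (neg_primed_mem_of_not_mem_IofS hS' har hI)
    exact Or.inl ⟨har, (neg_primed_mem_SofRR_iff.1 hneg).2⟩
  · exact Or.inr ⟨pos_primed_mem_SofRR_iff.1 (hsub (pos_primed_mem_of_mem_IofS hsub har hI)), har⟩

theorem SofRR_subset_of_IofS_eq (hsub : S' ⊆ SofRR r r')
    (hS' : SatProg S' (reduct (repairProg r IC) (SofRR r r'))) (hI : IofS S' = r'.atoms) :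
    SofRR r r' ⊆ S' := by
  rintro L (((⟨a, ha, rfl⟩ | ⟨a, ha, rfl⟩) | ⟨a, ht, ha, rfl⟩) | ⟨d, rfl⟩)
  · exact hS'.mem_of_fact_of_reduct (fact_base_mem_repairProg ha)
  · by_cases har : a ∈ r.atoms
    · obtain ⟨L, rfl, hL⟩ :=
        hS'.exists_mem_head_of_reduct (persist_primed_mem_repairProg (r.wf a har))
        (by rintro L rfl hneg; exact (neg_primed_mem_SofRR_iff.1 hneg).2 ha)
        (by rintro L rfl; exact hS'.mem_of_fact_of_reduct (fact_base_mem_repairProg har))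
      exact hL
    · exact pos_primed_mem_of_mem_IofS hsub har (hI ▸ ha)
  · by_cases har : a ∈ r.atoms
    · exact neg_primed_mem_of_not_mem_IofS hS' har (hI ▸ ha)
    · obtain ⟨L, rfl, hL⟩ := hS'.exists_mem_head_of_reduct (persist_neg_primed_mem_repairProg ht)
        (by
          rintro L (rfl | rfl) hL
          · exact har (pos_base_mem_SofRR_iff.1 hL)
          · exact ha (pos_primed_mem_SofRR_iff.1 hL))
        (by rintro L ⟨d, -, rfl⟩; exact hS'.mem_of_fact_of_reduct (fact_dom_mem_repairProg d))
      exact hL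
  · exact hS'.mem_of_fact_of_reduct (fact_dom_mem_repairProg d)

theorem eq_SofRR_of_satProg_reduct (h : IsRepair r r' IC) (hsub : S' ⊆ SofRR r r')
    (hS' : SatProg S' (reduct (repairProg r IC) (SofRR r r'))) : S' = SofRR r r' := by
  let r'' : Instance Pred D ar :=
    ⟨IofS S', (r.finite.union r'.finite).subset (IofS_subset hsub), fun a ha =>
      (IofS_subset hsub ha).elim (r.wf a) (r'.wf a)⟩
  have hΔ := h.2 r'' (satSet_IofS hsub hS') (symmDiff_IofS_subset hsub hS')
  exact hsub.antisymm (SofRR_subset_of_IofS_eq hsub hS' (symmDiff_right_injective _ hΔ))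

end Minimality

theorem statement5_general {Pred D : Type} {ar : Pred → ℕ}
    (r r' : Instance Pred D ar) (IC : Set (BIC Pred D ar))
    (h : IsRepair r r' IC) :
    ∃ S : Set (Lit (GAtom Pred D)), AnswerSet S (repairProg r IC) ∧
      r'.atoms = primedAtoms S := by
  refine ⟨SofRR r r', ⟨coherent_SofRR, satProg_reduct_self_iff.2 (satProg_SofRR h.1),
    fun S' hsub hS' => eq_SofRR_of_satProg_reduct h hsub hS'⟩, ?_⟩
  ext a
  exact pos_primed_mem_SofRR_iff.symm

/-- Theorem `tw`, part 1. Let `r` be a database instance over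
a finite domain `D` and `IC` a set of binary integrity constraints. For every
repair `r'` of `r` wrt `IC`, there exists an answer set `S` of the repair
program `Π(r)` such that `r' = {p(ā) | p′(ā) ∈ S}`. -/
theorem statement5 {Pred D : Type} [Finite Pred] [Finite D] {ar : Pred → ℕ}
    (r r' : Instance Pred D ar) (IC : Set (BIC Pred D ar))
    (h : IsRepair r r' IC) :
    ∃ S : Set (Lit (GAtom Pred D)), AnswerSet S (repairProg r IC) ∧
      r'.atoms = primedAtoms S :=
  statement5_general r r' IC h

end CQA
end

section
/- Let r be a database instance over a finite domain D and IC a set of binary integrity constraints. For every answer set S of the repair program Π(r), the database instance {p(ā) | p′(ā) ∈ S} is a repair of r wrt IC. -/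
namespace CQA

variable {Pred D : Type} {ar : Pred → ℕ}

/-! ## Auxiliary lemmas for Statement 6 -/

section Aux

variable {Pred D : Type} {ar : Pred → ℕ}

/-- Supportedness: every literal of an answer set occurs in the head of some
rule of the program whose weakly negated body is disjoint from the answer set. -/
lemma answerSet_support {α : Type} {P : Program α} {S : Set (Lit α)}
    (hS : AnswerSet S P) {L : Lit α} (hL : L ∈ S) :
    ∃ R ∈ P, (∀ M ∈ R.nbody, M ∉ S) ∧ L ∈ R.head := by
  by_contra h
  push_neg at h
  have hsat : SatProg (S \ {L}) (reduct P S) := by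
    intro R' hR' hb _
    obtain ⟨R, hRP, hnb, hEq⟩ := hR'
    obtain ⟨M, hM, hMS⟩ := hS.2.1 R' ⟨R, hRP, hnb, hEq⟩
      (hb.trans Set.diff_subset)
      (by subst hEq; exact fun M hM => absurd hM (Set.notMem_empty M))
    subst hEq
    refine ⟨M, hM, hMS, ?_⟩
    intro hML
    rw [Set.mem_singleton_iff] at hML
    exact h R hRP hnb (hML ▸ hM)
  have heq := hS.2.2 _ Set.diff_subset hsat
  rw [← heq] at hL
  exact hL.2 rfl

/-- Applying satisfaction of the reduct to a rule of the program whose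
weakly negated body is disjoint from `S`. -/
lemma sat_rule {α : Type} {P : Program α} {S T : Set (Lit α)}
    (hSat : SatProg T (reduct P S)) {R : Rule α} (hR : R ∈ P)
    (hnb : ∀ M ∈ R.nbody, M ∉ S) (hb : R.body ⊆ T) :
    ∃ L ∈ R.head, L ∈ T :=
  hSat (Rule.mk R.head R.body ∅) ⟨R, hR, hnb, rfl⟩ hb
    (fun M hM => absurd hM (Set.notMem_empty M))

lemma mem_fact_base (r : Instance Pred D ar) (IC : Set (BIC Pred D ar))
    {a : DBAtom Pred D} (ha : a ∈ r.atoms) :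
    fact (Lit.pos (GAtom.base a.1 a.2)) ∈ repairProg r IC :=
  Or.inl (Or.inl (Or.inl (Or.inl (Or.inl ⟨a, ha, rfl⟩))))

lemma mem_fact_dom (r : Instance Pred D ar) (IC : Set (BIC Pred D ar)) (d : D) :
    fact (Lit.pos (GAtom.dom d)) ∈ repairProg r IC :=
  Or.inl (Or.inl (Or.inl (Or.inl (Or.inr ⟨d, trivial, rfl⟩))))

lemma mem_stabPos (r : Instance Pred D ar) {IC : Set (BIC Pred D ar)}
    {c : BIC Pred D ar} (hc : c ∈ IC) (ν : Fin c.nvars → D)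
    (hbi : ¬ c.builtin ν) (j : Fin c.pos.length) :
    stabPosRule c ν j ∈ repairProg r IC :=
  Or.inl (Or.inl (Or.inr ⟨c, hc, ν, fun _ => trivial, hbi, j, rfl⟩))

lemma mem_stabNeg (r : Instance Pred D ar) {IC : Set (BIC Pred D ar)}
    {c : BIC Pred D ar} (hc : c ∈ IC) (ν : Fin c.nvars → D)
    (hbi : ¬ c.builtin ν) (j : Fin c.neg.length) :
    stabNegRule c ν j ∈ repairProg r IC :=
  Or.inl (Or.inr ⟨c, hc, ν, fun _ => trivial, hbi, j, rfl⟩)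

lemma mem_persist1 (r : Instance Pred D ar) (IC : Set (BIC Pred D ar))
    (p : Pred) (t : List D) (hlen : t.length = ar p) :
    Rule.mk {Lit.pos (GAtom.primed p t)} {Lit.pos (GAtom.base p t)}
      {Lit.neg (GAtom.primed p t)} ∈ repairProg r IC :=
  Or.inr ⟨p, t, hlen, fun _ _ => trivial, Or.inl rfl⟩

lemma mem_persist2 (r : Instance Pred D ar) (IC : Set (BIC Pred D ar))
    (p : Pred) (t : List D) (hlen : t.length = ar p) :
    Rule.mk {Lit.neg (GAtom.primed p t)} {L | ∃ d ∈ t, L = Lit.pos (GAtom.dom d)}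
      {Lit.pos (GAtom.base p t), Lit.pos (GAtom.primed p t)} ∈ repairProg r IC :=
  Or.inr ⟨p, t, hlen, fun _ _ => trivial, Or.inr rfl⟩

end Aux

/-- Theorem `tw`, part 2. Let `r` be a database instance over
a finite domain `D` and `IC` a set of binary integrity constraints. For every
answer set `S` of the repair program `Π(r)`, the database instance
`{p(ā) | p′(ā) ∈ S}` is a repair of `r` wrt `IC`. -/
theorem statement6 {Pred D : Type} [Finite Pred] [Finite D] {ar : Pred → ℕ}
    (r : Instance Pred D ar) (IC : Set (BIC Pred D ar))
    (S : Set (Lit (GAtom Pred D))) (hS : AnswerSet S (repairProg r IC)) :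
    ∃ r' : Instance Pred D ar, r'.atoms = primedAtoms S ∧ IsRepair r r' IC := by
  obtain ⟨hCoh, hSat, hMin⟩ := hS
  -- facts of the program are in S
  have hbase : ∀ a ∈ r.atoms, Lit.pos (GAtom.base a.1 a.2) ∈ S := by
    intro a ha
    obtain ⟨L, hL, hLS⟩ := sat_rule hSat (mem_fact_base r IC ha)
      (by intro M hM; simp [fact] at hM) (by intro M hM; simp [fact] at hM)
    simp only [fact, Set.mem_singleton_iff] at hL
    exact hL ▸ hLS
  have hdom : ∀ d : D, Lit.pos (GAtom.dom d) ∈ S := by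
    intro d
    obtain ⟨L, hL, hLS⟩ := sat_rule hSat (mem_fact_dom r IC d)
      (by intro M hM; simp [fact] at hM) (by intro M hM; simp [fact] at hM)
    simp only [fact, Set.mem_singleton_iff] at hL
    exact hL ▸ hLS
  -- shape of literals in S
  have hshape : ∀ L ∈ S, (∃ a ∈ r.atoms, L = Lit.pos (GAtom.base a.1 a.2)) ∨
      (∃ d : D, L = Lit.pos (GAtom.dom d)) ∨
      (∃ p t, t.length = ar p ∧
        (L = Lit.pos (GAtom.primed p t) ∨ L = Lit.neg (GAtom.primed p t))) := by
    intro L hL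
    obtain ⟨R, hRP, -, hLh⟩ := answerSet_support ⟨hCoh, hSat, hMin⟩ hL
    rcases hRP with ((((⟨a, ha, rfl⟩ | ⟨d, -, rfl⟩) | ⟨c, hc, ν, -, -, rfl⟩) |
        ⟨c, hc, ν, -, -, j, rfl⟩) | ⟨c, hc, ν, -, -, j, rfl⟩) |
        ⟨p, t, hlen, -, (rfl | rfl)⟩
    · simp only [fact, Set.mem_singleton_iff] at hLh
      exact Or.inl ⟨a, ha, hLh⟩
    · simp only [fact, Set.mem_singleton_iff] at hLh
      exact Or.inr (Or.inl ⟨d, hLh⟩)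
    · rcases hLh with ⟨a, ha, rfl⟩ | ⟨a, ha, rfl⟩
      · exact Or.inr (Or.inr ⟨a.1, a.2.map ν, by simp [c.wfpos a ha], Or.inl rfl⟩)
      · exact Or.inr (Or.inr ⟨a.1, a.2.map ν, by simp [c.wfneg a ha], Or.inr rfl⟩)
    · rcases hLh with ⟨i, -, rfl⟩ | ⟨a, ha, rfl⟩
      · exact Or.inr (Or.inr ⟨_, _,
          by rw [List.length_map]; exact c.wfpos _ (List.get_mem c.pos i), Or.inl rfl⟩)
      · exact Or.inr (Or.inr ⟨a.1, a.2.map ν, by simp [c.wfneg a ha], Or.inr rfl⟩)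
    · rcases hLh with ⟨a, ha, rfl⟩ | ⟨i, -, rfl⟩
      · exact Or.inr (Or.inr ⟨a.1, a.2.map ν, by simp [c.wfpos a ha], Or.inl rfl⟩)
      · exact Or.inr (Or.inr ⟨_, _,
          by rw [List.length_map]; exact c.wfneg _ (List.get_mem c.neg i), Or.inr rfl⟩)
    · simp only [Set.mem_singleton_iff] at hLh
      exact Or.inr (Or.inr ⟨p, t, hlen, Or.inl hLh⟩)
    · simp only [Set.mem_singleton_iff] at hLh
      exact Or.inr (Or.inr ⟨p, t, hlen, Or.inr hLh⟩)
  have hbase' : ∀ p t, Lit.pos (GAtom.base p t) ∈ S → (p, t) ∈ r.atoms := by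
    intro p t h
    rcases hshape _ h with ⟨a, ha, heq⟩ | ⟨d, heq⟩ | ⟨p', t', -, (heq | heq)⟩
    · simp only [Lit.pos.injEq, GAtom.base.injEq] at heq
      obtain ⟨rfl, rfl⟩ := heq
      exact ha
    · simp at heq
    · simp at heq
    · simp at heq
  have hplen : ∀ p t, Lit.pos (GAtom.primed p t) ∈ S → t.length = ar p := by
    intro p t h
    rcases hshape _ h with ⟨a, ha, heq⟩ | ⟨d, heq⟩ | ⟨p', t', hlen, (heq | heq)⟩
    · simp at heq
    · simp at heq
    · simp only [Lit.pos.injEq, GAtom.primed.injEq] at heq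
      obtain ⟨rfl, rfl⟩ := heq
      exact hlen
    · simp at heq
  -- totality on primed atoms
  have htot : ∀ p t, t.length = ar p →
      Lit.pos (GAtom.primed p t) ∈ S ∨ Lit.neg (GAtom.primed p t) ∈ S := by
    intro p t hlen
    by_cases hr : (p, t) ∈ r.atoms
    · by_cases hneg : Lit.neg (GAtom.primed p t) ∈ S
      · exact Or.inr hneg
      · left
        obtain ⟨L, hL, hLS⟩ := sat_rule hSat (mem_persist1 r IC p t hlen)
          (by intro M hM; rw [Set.mem_singleton_iff] at hM; exact hM ▸ hneg)
          (by intro M hM; rw [Set.mem_singleton_iff] at hM; exact hM ▸ hbase (p, t) hr)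
        rw [Set.mem_singleton_iff] at hL
        exact hL ▸ hLS
    · by_cases hpos : Lit.pos (GAtom.primed p t) ∈ S
      · exact Or.inl hpos
      · right
        obtain ⟨L, hL, hLS⟩ := sat_rule hSat (mem_persist2 r IC p t hlen)
          (by
            intro M hM
            rcases hM with hM | hM
            · exact hM ▸ fun h => hr (hbase' p t h)
            · rw [Set.mem_singleton_iff] at hM; exact hM ▸ hpos)
          (by rintro M ⟨d, -, rfl⟩; exact hdom d)
        rw [Set.mem_singleton_iff] at hL
        exact hL ▸ hLS
  set A' : Set (DBAtom Pred D) := primedAtoms S with hA'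
  have hA'mem : ∀ a : DBAtom Pred D, a ∈ A' ↔ Lit.pos (GAtom.primed a.1 a.2) ∈ S :=
    fun a => Iff.rfl
  have hnegS : ∀ p t, t.length = ar p → (p, t) ∉ A' →
      Lit.neg (GAtom.primed p t) ∈ S := by
    intro p t hlen hna
    exact (htot p t hlen).resolve_left hna
  have hnegA' : ∀ p t, Lit.neg (GAtom.primed p t) ∈ S → (p, t) ∉ A' := by
    intro p t hn hp
    exact hCoh (GAtom.primed p t) ⟨hp, hn⟩
  -- the candidate repair instance
  have hfin : A'.Finite := by
    have hsub : A' ⊆ ⋃ p : Pred, Prod.mk p '' {l : List D | l.length = ar p} := by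
      intro a ha
      refine Set.mem_iUnion.2 ⟨a.1, a.2, hplen a.1 a.2 ha, rfl⟩
    exact Set.Finite.subset
      (Set.finite_iUnion fun p => (List.finite_length_eq D (ar p)).image _) hsub
  refine ⟨⟨A', hfin, fun a ha => hplen a.1 a.2 ha⟩, rfl, ?_, ?_⟩
  · -- the primed atoms satisfy IC
    intro c hc ν
    by_contra hviol
    simp only [BIC.holdsAt, not_or, not_exists] at hviol
    push_neg at hviol
    obtain ⟨hvpos, hvneg, hbi⟩ := hviol
    rcases hpe : c.pos with _ | ⟨a0, rest⟩
    · -- c.pos empty, use a negative stabilizing rule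
      have hnegne : c.neg ≠ [] := by
        intro h
        have := c.lb
        rw [hpe, h] at this
        simp at this
      have hlen0 : 0 < c.neg.length := List.length_pos_iff.2 hnegne
      obtain ⟨L, hL, hLS⟩ := sat_rule hSat (mem_stabNeg r hc ν hbi ⟨0, hlen0⟩)
        (by intro M hM; simp only [stabNegRule] at hM; exact absurd hM (Set.notMem_empty M))
        (by
          rintro M (⟨v, -, rfl⟩ | hM)
          · exact hdom _
          · rw [Set.mem_singleton_iff] at hM
            subst hM
            exact (hA'mem _).1 (hvneg _ (List.get_mem c.neg ⟨0, hlen0⟩)))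
      rcases hL with ⟨a, ha, rfl⟩ | ⟨i, -, rfl⟩
      · rw [hpe] at ha; exact absurd ha List.not_mem_nil
      · exact hCoh _ ⟨(hA'mem _).1 (hvneg _ (List.get_mem c.neg i)), hLS⟩
    · -- c.pos nonempty, use a positive stabilizing rule
      have hlen0 : 0 < c.pos.length := by rw [hpe]; simp
      obtain ⟨L, hL, hLS⟩ := sat_rule hSat (mem_stabPos r hc ν hbi ⟨0, hlen0⟩)
        (by intro M hM; simp only [stabPosRule] at hM; exact absurd hM (Set.notMem_empty M))
        (by
          rintro M (⟨v, -, rfl⟩ | hM)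
          · exact hdom _
          · rw [Set.mem_singleton_iff] at hM
            subst hM
            refine hnegS _ _ ?_ (hvpos _ (List.get_mem c.pos ⟨0, hlen0⟩))
            rw [List.length_map]
            exact c.wfpos _ (List.get_mem c.pos ⟨0, hlen0⟩))
      rcases hL with ⟨i, -, rfl⟩ | ⟨a, ha, rfl⟩
      · exact hvpos _ (List.get_mem c.pos i) ((hA'mem _).2 hLS)
      · exact hCoh _ ⟨(hA'mem _).1 (hvneg a ha), hLS⟩
  · -- minimality of the symmetric difference
    intro r'' hIC'' hsub
    set B : Set (DBAtom Pred D) := r''.atoms with hB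
    by_contra hne
    obtain ⟨e, heD', heD''⟩ :=
      Set.exists_of_ssubset (hsub.ssubset_of_ne hne)
    -- consequences of Δ(r,B) ⊆ Δ(r,A')
    have hK1 : ∀ a : DBAtom Pred D, a ∈ B → a ∉ A' → a ∈ r.atoms := by
      intro a haB haA
      by_contra hr
      rcases Set.mem_symmDiff.1 (hsub (Set.mem_symmDiff.2 (Or.inr ⟨haB, hr⟩))) with
        ⟨h1, -⟩ | ⟨h1, -⟩
      · exact hr h1
      · exact haA h1
    have hK3 : ∀ a : DBAtom Pred D, a ∈ r.atoms → a ∈ A' → a ∈ B := by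
      intro a har haA
      by_contra hb
      rcases Set.mem_symmDiff.1 (hsub (Set.mem_symmDiff.2 (Or.inl ⟨har, hb⟩))) with
        ⟨-, h2⟩ | ⟨-, h2⟩
      · exact h2 haA
      · exact h2 har
    have hK4 : ∀ a : DBAtom Pred D, a ∉ r.atoms → a ∉ A' → a ∉ B := by
      intro a har haA hb
      rcases Set.mem_symmDiff.1 (hsub (Set.mem_symmDiff.2 (Or.inr ⟨hb, har⟩))) with
        ⟨h1, -⟩ | ⟨h1, -⟩
      · exact har h1
      · exact haA h1
    -- the smaller interpretation
    set Rem : Set (Lit (GAtom Pred D)) :=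
      {L | ∃ a : DBAtom Pred D, a ∈ A' ∧ a ∉ B ∧ L = Lit.pos (GAtom.primed a.1 a.2)} ∪
      {L | ∃ a : DBAtom Pred D, a ∈ B ∧ a ∉ A' ∧ L = Lit.neg (GAtom.primed a.1 a.2)}
      with hRem
    set S' : Set (Lit (GAtom Pred D)) := S \ Rem with hS'
    have hM3 : ∀ p t, Lit.pos (GAtom.primed p t) ∈ S' ↔
        ((p, t) ∈ A' ∧ (p, t) ∈ B) := by
      intro p t
      constructor
      · rintro ⟨hs, hrem⟩
        refine ⟨hs, ?_⟩
        by_contra hb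
        exact hrem (Or.inl ⟨(p, t), hs, hb, rfl⟩)
      · rintro ⟨ha, hb⟩
        refine ⟨ha, ?_⟩
        rintro (⟨a, h1, h2, heq⟩ | ⟨a, h1, h2, heq⟩)
        · simp only [Lit.pos.injEq, GAtom.primed.injEq] at heq
          obtain ⟨rfl, rfl⟩ := heq
          exact h2 hb
        · simp at heq
    have hM4 : ∀ p t, Lit.neg (GAtom.primed p t) ∈ S' ↔
        (Lit.neg (GAtom.primed p t) ∈ S ∧ (p, t) ∉ B) := by
      intro p t
      constructor
      · rintro ⟨hs, hrem⟩
        refine ⟨hs, ?_⟩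
        intro hb
        exact hrem (Or.inr ⟨(p, t), hb, hnegA' p t hs, rfl⟩)
      · rintro ⟨hs, hb⟩
        refine ⟨hs, ?_⟩
        rintro (⟨a, h1, h2, heq⟩ | ⟨a, h1, h2, heq⟩)
        · simp at heq
        · simp only [Lit.neg.injEq, GAtom.primed.injEq] at heq
          obtain ⟨rfl, rfl⟩ := heq
          exact hb h1
    have hMbase : ∀ p t, Lit.pos (GAtom.base p t) ∈ S → Lit.pos (GAtom.base p t) ∈ S' := by
      intro p t hs
      refine ⟨hs, ?_⟩
      rintro (⟨a, -, -, heq⟩ | ⟨a, -, -, heq⟩) <;> simp at heq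
    have hMdom : ∀ d : D, Lit.pos (GAtom.dom d) ∈ S' := by
      intro d
      refine ⟨hdom d, ?_⟩
      rintro (⟨a, -, -, heq⟩ | ⟨a, -, -, heq⟩) <;> simp at heq
    -- S' satisfies the reduct
    have hS'sat : SatProg S' (reduct (repairProg r IC) S) := by
      rintro R' ⟨R, hRP, hnb, rfl⟩ hb -
      rcases hRP with ((((⟨a, ha, rfl⟩ | ⟨d, -, rfl⟩) | ⟨c, hc, ν, -, hbi, rfl⟩) |
          ⟨c, hc, ν, -, hbi, j, rfl⟩) | ⟨c, hc, ν, -, hbi, j, rfl⟩) |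
          ⟨p, t, hlen, -, (rfl | rfl)⟩
      · exact ⟨_, rfl, hMbase a.1 a.2 (hbase a ha)⟩
      · exact ⟨_, rfl, hMdom d⟩
      · -- triggering rule
        have hnotr : ∀ a ∈ c.pos, (a.1, a.2.map ν) ∉ r.atoms := by
          intro a ha har
          exact hnb _ ⟨a, ha, rfl⟩ (hbase _ har)
        have hinr : ∀ a ∈ c.neg, (a.1, a.2.map ν) ∈ r.atoms := by
          intro a ha
          exact hbase' _ _ (hb (Or.inr ⟨a, ha, rfl⟩)).1
        rcases hIC'' c hc ν with ⟨a, ha, haB⟩ | ⟨a, ha, haB⟩ | hbi'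
        · have haA : (a.1, a.2.map ν) ∈ A' := by
            by_contra h
            exact hnotr a ha (hK1 _ haB h)
          exact ⟨_, Or.inl ⟨a, ha, rfl⟩, (hM3 _ _).2 ⟨haA, haB⟩⟩
        · have haA : (a.1, a.2.map ν) ∉ A' := by
            intro h
            exact haB (hK3 _ (hinr a ha) h)
          refine ⟨_, Or.inr ⟨a, ha, rfl⟩, (hM4 _ _).2 ⟨?_, haB⟩⟩
          exact hnegS _ _ (by simp [c.wfneg a ha]) haA
        · exact absurd hbi' hbi
      · -- positive stabilizing rule
        have hjS' := hb (Or.inr rfl)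
        rw [hM4] at hjS'
        obtain ⟨hjS, hjB⟩ := hjS'
        have hjA : ((c.pos.get j).1, (c.pos.get j).2.map ν) ∉ A' := hnegA' _ _ hjS
        have hbodyS : (stabPosRule c ν j).body ⊆ S := by
          rintro M (⟨v, -, rfl⟩ | hM)
          · exact hdom _
          · rw [Set.mem_singleton_iff] at hM
            exact hM ▸ hjS
        obtain ⟨L, hL, hLS⟩ := sat_rule hSat (mem_stabPos r hc ν hbi j)
          (by intro M hM; exact absurd hM (Set.notMem_empty M)) hbodyS
        rcases hIC'' c hc ν with ⟨a, ha, haB⟩ | ⟨a, ha, haB⟩ | hbi'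
        · -- witness is a positive literal of c
          obtain ⟨i, hi⟩ := List.mem_iff_get.1 ha
          have hij : i ≠ j := by
            intro h
            rw [h] at hi
            rw [hi] at hjB
            exact hjB haB
          have h2 : 2 ≤ c.pos.length := by
            have h1 := i.2
            have h2 := j.2
            have : i.1 ≠ j.1 := fun h => hij (Fin.ext h)
            omega
          rcases hL with ⟨i', hi'j, rfl⟩ | ⟨a', ha', rfl⟩
          · have hii' : i' = i := by
              refine Fin.ext ?_
              have hub := c.ub
              have : i'.1 ≠ j.1 := fun h => hi'j (Fin.ext h)
              have : i.1 ≠ j.1 := fun h => hij (Fin.ext h)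
              have h1 := i.2
              have h2 := i'.2
              have h3 := j.2
              omega
            rw [hii'] at hLS
            rw [← hi] at haB
            exact ⟨_, Or.inl ⟨i, hij, rfl⟩, (hM3 _ _).2 ⟨hLS, haB⟩⟩
          · exfalso
            have := List.length_pos_of_mem ha'
            have hub := c.ub
            omega
        · -- witness is a negative literal of c
          rcases hL with ⟨i', hi'j, rfl⟩ | ⟨a', ha', rfl⟩
          · exfalso
            have h1 := List.length_pos_of_mem ha
            have hub := c.ub
            have : i'.1 ≠ j.1 := fun h => hi'j (Fin.ext h)
            have h2 := i'.2
            have h3 := j.2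
            omega
          · have haa' : a' = a := by
              have h1 := List.length_pos_of_mem ha
              have h2 := j.2
              have hub := c.ub
              have hneg1 : c.neg.length = 1 := by omega
              obtain ⟨x, hx⟩ := List.length_eq_one_iff.1 hneg1
              rw [hx] at ha ha'
              rw [List.mem_singleton.1 ha, List.mem_singleton.1 ha']
            subst haa'
            exact ⟨_, Or.inr ⟨a', ha', rfl⟩, (hM4 _ _).2 ⟨hLS, haB⟩⟩
        · exact absurd hbi' hbi
      · -- negative stabilizing rule
        have hjS' := hb (Or.inr rfl)
        rw [hM3] at hjS'
        obtain ⟨hjA, hjB⟩ := hjS'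
        have hbodyS : (stabNegRule c ν j).body ⊆ S := by
          rintro M (⟨v, -, rfl⟩ | hM)
          · exact hdom _
          · rw [Set.mem_singleton_iff] at hM
            exact hM ▸ (hA'mem _).1 hjA
        obtain ⟨L, hL, hLS⟩ := sat_rule hSat (mem_stabNeg r hc ν hbi j)
          (by intro M hM; exact absurd hM (Set.notMem_empty M)) hbodyS
        rcases hIC'' c hc ν with ⟨a, ha, haB⟩ | ⟨a, ha, haB⟩ | hbi'
        · -- witness is a positive literal of c
          rcases hL with ⟨a', ha', rfl⟩ | ⟨i', hi'j, rfl⟩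
          · have haa' : a' = a := by
              have h1 := List.length_pos_of_mem ha
              have h2 := j.2
              have hub := c.ub
              have hpos1 : c.pos.length = 1 := by omega
              obtain ⟨x, hx⟩ := List.length_eq_one_iff.1 hpos1
              rw [hx] at ha ha'
              rw [List.mem_singleton.1 ha, List.mem_singleton.1 ha']
            subst haa'
            exact ⟨_, Or.inl ⟨a', ha', rfl⟩, (hM3 _ _).2 ⟨hLS, haB⟩⟩
          · exfalso
            have h1 := List.length_pos_of_mem ha
            have hub := c.ub
            have : i'.1 ≠ j.1 := fun h => hi'j (Fin.ext h)
            have h2 := i'.2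
            have h3 := j.2
            omega
        · -- witness is a negative literal of c
          obtain ⟨i, hi⟩ := List.mem_iff_get.1 ha
          have hij : i ≠ j := by
            intro h
            rw [h] at hi
            rw [hi] at hjB
            exact haB hjB
          rcases hL with ⟨a', ha', rfl⟩ | ⟨i', hi'j, rfl⟩
          · exfalso
            have h1 := List.length_pos_of_mem ha'
            have hub := c.ub
            have : i.1 ≠ j.1 := fun h => hij (Fin.ext h)
            have h2 := i.2
            have h3 := j.2
            omega
          · have hii' : i' = i := by
              refine Fin.ext ?_
              have hub := c.ub
              have : i'.1 ≠ j.1 := fun h => hi'j (Fin.ext h)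
              have : i.1 ≠ j.1 := fun h => hij (Fin.ext h)
              have h1 := i.2
              have h2 := i'.2
              have h3 := j.2
              omega
            rw [hii'] at hLS
            rw [← hi] at haB
            exact ⟨_, Or.inr ⟨i, hij, rfl⟩, (hM4 _ _).2 ⟨hLS, haB⟩⟩
        · exact absurd hbi' hbi
      · -- persistence rule 1
        have hneg : Lit.neg (GAtom.primed p t) ∉ S := hnb _ rfl
        have hposS : Lit.pos (GAtom.primed p t) ∈ S := (htot p t hlen).resolve_right hneg
        have htA : (p, t) ∈ A' := hposS
        have htr : (p, t) ∈ r.atoms := hbase' p t (hb rfl).1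
        exact ⟨_, rfl, (hM3 _ _).2 ⟨htA, hK3 _ htr htA⟩⟩
      · -- persistence rule 2
        have hnb1 : Lit.pos (GAtom.base p t) ∉ S := hnb _ (Or.inl rfl)
        have hnb2 : Lit.pos (GAtom.primed p t) ∉ S := hnb _ (Or.inr rfl)
        have htr : (p, t) ∉ r.atoms := fun h => hnb1 (hbase (p, t) h)
        have htA : (p, t) ∉ A' := hnb2
        have hnS : Lit.neg (GAtom.primed p t) ∈ S := hnegS p t hlen htA
        exact ⟨_, rfl, (hM4 _ _).2 ⟨hnS, hK4 _ htr htA⟩⟩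
    -- S' = S by minimality, but a literal of S was removed: contradiction
    have heqS : S' = S := hMin S' Set.diff_subset hS'sat
    rcases Set.mem_symmDiff.1 heD' with ⟨her, hnA'⟩ | ⟨heA', hnr⟩
    · have heB : e ∈ B := by
        by_contra h
        exact heD'' (Set.mem_symmDiff.2 (Or.inl ⟨her, h⟩))
      have hLS : Lit.neg (GAtom.primed e.1 e.2) ∈ S :=
        hnegS e.1 e.2 (r.wf e her) hnA'
      rw [← heqS] at hLS
      exact hLS.2 (Or.inr ⟨e, heB, hnA', rfl⟩)
    · have heB : e ∉ B := by
        intro h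
        exact heD'' (Set.mem_symmDiff.2 (Or.inr ⟨h, hnr⟩))
      have hLS : Lit.pos (GAtom.primed e.1 e.2) ∈ S := heA'
      rw [← heqS] at hLS
      exact hLS.2 (Or.inl ⟨e, heA', heB, rfl⟩)

end CQA
end
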